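/- arXiv:1605.01240 — 2 statements merged into one kernel-verified Lean document; each statement's English description precedes it below -/
import Mathlib

section
/- (Proposition 14) Let Σ be a finite connected 3-dimensional simplicial complex with β_3(Σ) ≥ 1 such that the space Z_3(Σ) of Z_2 3-cycles admits a 2-complete basis (by Theorem 2 of the paper, this holds whenever Σ is PL embeddable into ℝ^{4}). Then 3·f_3(Σ) ≤ 5·( f_2(Σ) − f_1(Σ) − β_2(Σ) + β_1(Σ) + n − 2 ), where n is the number of vertices of Σ. -/
/-!
By the Euler–Poincaré relation, `β₀ = 1` and the absence of `4`-faces, the claim is equivalent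
to `5 (β₃ + 1) ≤ 2 f₃`. A nonzero `3`-cycle has at least `5` tetrahedra in its support: each of the
four facets of a tetrahedron of the support lies in a second one, and these are distinct. Take a
`2`-complete basis `b₁, …, b_{β₃}` of `Z₃` and its sum `z ≠ 0`. A tetrahedron lies in the support
of at most two `bᵢ`, and if it lies in the support of `z` it lies in that of an odd number of them,
hence of exactly one. Counting incidences, `5 β₃ + 5 ≤ ∑ |supp bᵢ| + |supp z| ≤ 2 f₃`.
-/

open Finset

/-- A finite simplicial complex on a finite vertex type `V`:
a finite nonempty collection of nonempty finite sets (faces)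
closed under taking nonempty subsets. -/
structure SComplex (V : Type) [DecidableEq V] [Fintype V] where
  faces : Finset (Finset V)
  nonempty : faces.Nonempty
  no_empty : ∀ σ ∈ faces, σ ≠ ∅
  down_closed : ∀ σ ∈ faces, ∀ τ, τ ⊆ σ → τ ≠ ∅ → τ ∈ faces

namespace SComplex

variable {V : Type} [DecidableEq V] [Fintype V]

/-- The set of faces of dimension `i` (i.e. of cardinality `i+1`). -/
def facesDim (K : SComplex V) (i : ℕ) : Finset (Finset V) :=
  K.faces.filter (fun σ => σ.card = i + 1)

/-- `fnum K i` is the face number `f_i`. -/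
def fnum (K : SComplex V) (i : ℕ) : ℕ := (K.facesDim i).card

/-- The space of `Z_2` `i`-chains: functions from the `i`-faces to `Z_2`. -/
abbrev Chains (K : SComplex V) (i : ℕ) : Type := {σ // σ ∈ K.facesDim i} → ZMod 2

/-- The boundary map `∂_i : C_i → C_{i-1}` (and `∂_0 = 0`): the value of `∂ c` on an
`(i-1)`-face `τ` is the sum over `i`-faces `σ ⊇ τ` of `c σ`. -/
def boundary (K : SComplex V) (i : ℕ) : Chains K i →ₗ[ZMod 2] Chains K (i - 1) :=
  if i = 0 then 0 else
  { toFun := fun c τ =>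
      ∑ σ : {σ // σ ∈ K.facesDim i}, if (τ : Finset V) ⊆ (σ : Finset V) then c σ else 0
    map_add' := by
      intro c d
      funext τ
      show (∑ σ : {σ // σ ∈ K.facesDim i}, _) = _
      rw [Pi.add_apply, ← Finset.sum_add_distrib]
      apply Finset.sum_congr rfl
      intro σ _
      by_cases h : (τ : Finset V) ⊆ (σ : Finset V) <;> simp [h]
    map_smul' := by
      intro a c
      funext τ
      show (∑ σ : {σ // σ ∈ K.facesDim i}, _) = _
      rw [RingHom.id_apply, Pi.smul_apply, smul_eq_mul, Finset.mul_sum]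
      apply Finset.sum_congr rfl
      intro σ _
      by_cases h : (τ : Finset V) ⊆ (σ : Finset V) <;> simp [h] }

/-- The `i`-th `Z_2` Betti number: `dim ker ∂_i − rank ∂_{i+1}`. -/
noncomputable def betti (K : SComplex V) (i : ℕ) : ℕ :=
  Module.finrank (ZMod 2) (LinearMap.ker (K.boundary i)) -
    Module.finrank (ZMod 2) (LinearMap.range (K.boundary (i + 1)))

/-- The number of `i`-faces in the support of a chain. -/
def suppCard {K : SComplex V} {i : ℕ} (c : Chains K i) : ℕ :=
  (Finset.univ.filter (fun σ => c σ ≠ 0)).card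

/-- The girth: the minimal support size of a nonzero `d`-cycle. -/
noncomputable def girth (K : SComplex V) (d : ℕ) : ℕ :=
  sInf {n | ∃ c : Chains K d, c ∈ LinearMap.ker (K.boundary d) ∧ c ≠ 0 ∧ suppCard c = n}

/-- `Z_d(K)` admits an `m`-complete basis: a basis of the space of `d`-cycles such that every
`d`-face lies in the support of at most `m` basis elements. -/
def HasCompleteBasis (K : SComplex V) (d m : ℕ) : Prop :=
  ∃ (ι : Type) (_ : Fintype ι) (b : Module.Basis ι (ZMod 2) (LinearMap.ker (K.boundary d))),
    ∀ σ : {σ // σ ∈ K.facesDim d},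
      (Finset.univ.filter (fun i : ι => (b i).1 σ ≠ 0)).card ≤ m

/-- `K` is `d`-dimensional: `d` is the maximal dimension of a face. -/
def IsDim (K : SComplex V) (d : ℕ) : Prop :=
  (∀ σ ∈ K.faces, σ.card ≤ d + 1) ∧ ∃ σ ∈ K.faces, σ.card = d + 1

/-- `K` is pure `d`-dimensional: every face is contained in a `d`-face. -/
def IsPure (K : SComplex V) (d : ℕ) : Prop :=
  ∀ σ ∈ K.faces, ∃ τ ∈ K.faces, σ ⊆ τ ∧ τ.card = d + 1

/-- A `d`-dimensional complex is balanced if its vertices can be colored with `d+1` colors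
so that the coloring is injective on every face. -/
def IsBalanced (K : SComplex V) (d : ℕ) : Prop :=
  ∃ coloring : V → Fin (d + 1), ∀ σ ∈ K.faces, Set.InjOn coloring (σ : Set V)

/-- The `d`-skeleton of `K`: all faces of dimension at most `d`. -/
def skeleton (K : SComplex V) (d : ℕ) : SComplex V where
  faces := K.faces.filter (fun σ => σ.card ≤ d + 1)
  nonempty := by
    obtain ⟨σ, hσ⟩ := K.nonempty
    obtain ⟨v, hv⟩ := Finset.nonempty_iff_ne_empty.mpr (K.no_empty σ hσ)
    refine ⟨{v}, Finset.mem_filter.mpr ⟨K.down_closed σ hσ {v}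
      (Finset.singleton_subset_iff.mpr hv) (Finset.singleton_ne_empty v), by simp⟩⟩
  no_empty := by
    intro σ hσ
    exact K.no_empty σ (Finset.mem_filter.mp hσ).1
  down_closed := by
    intro σ hσ τ hτσ hτ
    rw [Finset.mem_filter] at hσ ⊢
    exact ⟨K.down_closed σ hσ.1 τ hτσ hτ, le_trans (Finset.card_le_card hτσ) hσ.2⟩

end SComplex

theorem sum_zmod_two_eq_card_filter_ne_zero {ι : Type*} (s : Finset ι) (f : ι → ZMod 2) :
    ∑ i ∈ s, f i = #{i ∈ s | f i ≠ 0} := by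
  rw [← sum_boole]
  refine sum_congr rfl fun i _ => ?_
  exact (by decide : ∀ x : ZMod 2, x = if x ≠ 0 then 1 else 0) (f i)

theorem mul_card_add_one_le_of_complete_basis {α ι : Type*} [Fintype α] [Fintype ι] [Nonempty ι]
    {W : Submodule (ZMod 2) (α → ZMod 2)} (b : Module.Basis ι (ZMod 2) W) {g m : ℕ}
    (hm : Even m) (hg : ∀ w : W, w ≠ 0 → g ≤ #{a | (w : α → ZMod 2) a ≠ 0})
    (hb : ∀ a, #{i | (b i : α → ZMod 2) a ≠ 0} ≤ m) :
    g * (Fintype.card ι + 1) ≤ m * Fintype.card α := by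
  set cov : α → ℕ := fun a => #{i | (b i : α → ZMod 2) a ≠ 0}
  set z : W := ∑ i, b i
  have hz : z ≠ 0 := fun h => one_ne_zero <| Fintype.linearIndependent_iff.mp
    b.linearIndependent (fun _ => 1) (by simpa using h) (Classical.arbitrary ι)
  have hz_apply (a : α) : (z : α → ZMod 2) a = cov a := by
    rw [Submodule.coe_sum, Finset.sum_apply, sum_zmod_two_eq_card_filter_ne_zero]
  -- `z` is nonzero exactly where `cov` is odd, hence below `m` since `m` is even
  have hpoint (a : α) : cov a + (if (z : α → ZMod 2) a ≠ 0 then 1 else 0) ≤ m := by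
    split_ifs with hza
    · rw [hz_apply, ZMod.natCast_ne_zero_iff_odd] at hza
      obtain ⟨k, hk⟩ := hm
      obtain ⟨j, hj⟩ := hza
      have hcov : cov a ≤ m := hb a
      omega
    · simpa using hb a
  calc g * (Fintype.card ι + 1) = ∑ _i : ι, g + g := by
        rw [sum_const, card_univ, smul_eq_mul]
        ring
    _ ≤ ∑ i, #{a | (b i : α → ZMod 2) a ≠ 0} + #{a | (z : α → ZMod 2) a ≠ 0} :=
        add_le_add (sum_le_sum fun i _ => hg _ (b.ne_zero i)) (hg z hz)
    _ = ∑ a, (cov a + if (z : α → ZMod 2) a ≠ 0 then 1 else 0) := by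
        simp only [sum_add_distrib, cov, card_filter]
        rw [sum_comm]
    _ ≤ ∑ _a : α, m := sum_le_sum fun a _ => hpoint a
    _ = m * Fintype.card α := by rw [sum_const, card_univ, smul_eq_mul, mul_comm]

namespace SComplex

variable {V : Type} [DecidableEq V] [Fintype V]

lemma mem_facesDim {K : SComplex V} {i : ℕ} {σ : Finset V} :
    σ ∈ K.facesDim i ↔ σ ∈ K.faces ∧ σ.card = i + 1 := Finset.mem_filter

lemma boundary_zero (K : SComplex V) : K.boundary 0 = 0 := if_pos rfl

lemma boundary_succ_apply (K : SComplex V) (i : ℕ) (c : Chains K (i + 1))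
    (τ : {τ // τ ∈ K.facesDim i}) :
    K.boundary (i + 1) c τ =
      ∑ σ : {σ // σ ∈ K.facesDim (i + 1)}, if (τ : Finset V) ⊆ σ then c σ else 0 := by
  rw [boundary, if_neg i.succ_ne_zero]
  rfl

lemma finrank_chains (K : SComplex V) (i : ℕ) :
    Module.finrank (ZMod 2) (Chains K i) = K.fnum i := by
  rw [Module.finrank_fintype_fun_eq_card, Fintype.card_coe, fnum]

lemma card_facesDim_between (K : SComplex V) {τ σ : Finset V} (hσ : σ ∈ K.faces)
    (hτσ : τ ⊆ σ) :
    #{ρ ∈ K.facesDim τ.card | τ ⊆ ρ ∧ ρ ⊆ σ} = #(σ \ τ) := by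
  have himage : {ρ ∈ K.facesDim τ.card | τ ⊆ ρ ∧ ρ ⊆ σ} = (σ \ τ).image (insert · τ) := by
    ext ρ
    simp only [mem_filter, mem_facesDim, mem_image, mem_sdiff]
    constructor
    · rintro ⟨⟨-, hρ⟩, hτρ, hρσ⟩
      obtain ⟨x, hxτ, rfl⟩ := Finset.exists_eq_insert_iff.mpr ⟨hτρ, hρ.symm⟩
      exact ⟨x, ⟨hρσ (mem_insert_self x τ), hxτ⟩, rfl⟩
    · rintro ⟨x, ⟨hxσ, hxτ⟩, rfl⟩
      have hsub : insert x τ ⊆ σ := insert_subset hxσ hτσ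
      exact ⟨⟨K.down_closed σ hσ _ hsub (insert_ne_empty x τ), card_insert_of_notMem hxτ⟩,
        subset_insert x τ, hsub⟩
  rw [himage, card_image_of_injOn]
  intro x hx y _ hxy
  exact (insert_inj (mem_sdiff.mp hx).2).mp hxy

theorem boundary_boundary (K : SComplex V) (i : ℕ) (c : Chains K (i + 1 + 1)) :
    K.boundary (i + 1) (K.boundary (i + 1 + 1) c) = 0 := by
  funext τ
  have hτ : (τ : Finset V).card = i + 1 := (mem_facesDim.mp τ.2).2
  -- each `(i+2)`-face `σ ⊇ τ` is counted once for each of the two `(i+1)`-faces between them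
  have hcount : ∀ σ : {σ // σ ∈ K.facesDim (i + 1 + 1)},
      Even #{ρ ∈ K.facesDim (i + 1) | (τ : Finset V) ⊆ ρ ∧ ρ ⊆ σ} := by
    intro σ
    obtain ⟨hσ, hσcard⟩ := mem_facesDim.mp σ.2
    by_cases hτσ : (τ : Finset V) ⊆ σ
    · have h := K.card_facesDim_between hσ hτσ
      rw [hτ, card_sdiff_of_subset hτσ, hσcard, hτ] at h
      exact ⟨1, by omega⟩
    · rw [filter_false_of_mem fun ρ _ h => hτσ (h.1.trans h.2)]
      exact .zero
  calc K.boundary (i + 1) (K.boundary (i + 1 + 1) c) τ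
      = ∑ σ : {σ // σ ∈ K.facesDim (i + 1 + 1)},
          #{ρ ∈ K.facesDim (i + 1) | (τ : Finset V) ⊆ ρ ∧ ρ ⊆ σ} • c σ := by
        simp only [boundary_succ_apply, ite_sum_zero, ← ite_and]
        rw [sum_comm]
        refine sum_congr rfl fun σ _ => ?_
        rw [sum_coe_sort (K.facesDim (i + 1))
          (fun ρ => if (τ : Finset V) ⊆ ρ ∧ ρ ⊆ σ then c σ else 0), ← sum_filter, sum_const]
    _ = 0 := sum_eq_zero fun σ _ => by
        rw [nsmul_eq_mul, (hcount σ).natCast_zmod_two, zero_mul]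

lemma range_boundary_le_ker_boundary (K : SComplex V) (i : ℕ) :
    LinearMap.range (K.boundary (i + 1)) ≤ LinearMap.ker (K.boundary i) := by
  rcases i with _ | i
  · rw [boundary_zero, LinearMap.ker_zero]
    exact le_top
  · rintro _ ⟨c, rfl⟩
    exact K.boundary_boundary i c

lemma betti_add_finrank_range_boundary (K : SComplex V) (i : ℕ) :
    K.betti i + Module.finrank (ZMod 2) (LinearMap.range (K.boundary (i + 1))) =
      Module.finrank (ZMod 2) (LinearMap.ker (K.boundary i)) :=
  Nat.sub_add_cancel (Submodule.finrank_mono (K.range_boundary_le_ker_boundary i))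

lemma finrank_range_add_finrank_ker_boundary (K : SComplex V) (i : ℕ) :
    Module.finrank (ZMod 2) (LinearMap.range (K.boundary i)) +
      Module.finrank (ZMod 2) (LinearMap.ker (K.boundary i)) = K.fnum i := by
  rw [LinearMap.finrank_range_add_finrank_ker, finrank_chains]

lemma finrank_ker_boundary_zero (K : SComplex V) :
    Module.finrank (ZMod 2) (LinearMap.ker (K.boundary 0)) = K.fnum 0 := by
  rw [boundary_zero, LinearMap.ker_zero, finrank_top, finrank_chains]

lemma betti_eq_finrank_ker_of_card_le (K : SComplex V) {d : ℕ}
    (h : ∀ σ ∈ K.faces, σ.card ≤ d + 1) :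
    K.betti d = Module.finrank (ZMod 2) (LinearMap.ker (K.boundary d)) := by
  have hempty : K.fnum (d + 1) = 0 :=
    card_eq_zero.mpr (filter_eq_empty_iff.mpr fun σ hσ hcard => by linarith [h σ hσ])
  have hrange := LinearMap.finrank_range_le (K.boundary (d + 1))
  rw [finrank_chains, hempty] at hrange
  rw [betti]
  omega

lemma even_card_filter_of_boundary_eq_zero (K : SComplex V) {i : ℕ} {c : Chains K (i + 1)}
    (hc : K.boundary (i + 1) c = 0) (τ : {τ // τ ∈ K.facesDim i}) :
    Even #{σ : {σ // σ ∈ K.facesDim (i + 1)} | (τ : Finset V) ⊆ σ ∧ c σ ≠ 0} := by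
  rw [← ZMod.natCast_eq_zero_iff_even, ← filter_filter, ← sum_zmod_two_eq_card_filter_ne_zero,
    sum_filter, ← boundary_succ_apply, hc]
  rfl

lemma exists_ne_superset_erase_of_boundary_eq_zero (K : SComplex V) {d : ℕ}
    {c : Chains K (d + 1)} (hc : K.boundary (d + 1) c = 0) {σ₀ : {σ // σ ∈ K.facesDim (d + 1)}}
    (hσ₀ : c σ₀ ≠ 0) {v : V} (hv : v ∈ (σ₀ : Finset V)) :
    ∃ σ : {σ // σ ∈ K.facesDim (d + 1)}, σ ≠ σ₀ ∧ c σ ≠ 0 ∧ (σ₀ : Finset V).erase v ⊆ σ := by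
  obtain ⟨hσ₀K, hσ₀card⟩ := mem_facesDim.mp σ₀.2
  have hcard : ((σ₀ : Finset V).erase v).card = d + 1 := by
    rw [card_erase_of_mem hv, hσ₀card]
    rfl
  have hτ : (σ₀ : Finset V).erase v ∈ K.facesDim d :=
    mem_facesDim.mpr ⟨K.down_closed _ hσ₀K _ (erase_subset v _)
      (card_pos.mp (by omega)).ne_empty, hcard⟩
  set T : Finset {σ // σ ∈ K.facesDim (d + 1)} := {σ | (σ₀ : Finset V).erase v ⊆ σ ∧ c σ ≠ 0}
  obtain ⟨k, hk⟩ : Even #T := K.even_card_filter_of_boundary_eq_zero hc ⟨_, hτ⟩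
  have hpos : 0 < #T := card_pos.mpr ⟨σ₀, mem_filter.mpr ⟨mem_univ _, erase_subset v _, hσ₀⟩⟩
  obtain ⟨σ, hσ, hσσ₀⟩ := exists_mem_ne (s := T) (by omega) σ₀
  obtain ⟨-, hsub, hcσ⟩ := mem_filter.mp hσ
  exact ⟨σ, hσσ₀, hcσ, hsub⟩

theorem add_three_le_suppCard (K : SComplex V) {d : ℕ} {c : Chains K (d + 1)}
    (hc : K.boundary (d + 1) c = 0) (hne : c ≠ 0) : d + 3 ≤ suppCard c := by
  obtain ⟨σ₀, hσ₀⟩ : ∃ σ, c σ ≠ 0 := Function.ne_iff.mp hne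
  have hσ₀card : (σ₀ : Finset V).card = d + 2 := (mem_facesDim.mp σ₀.2).2
  have : Nonempty {σ // σ ∈ K.facesDim (d + 1)} := ⟨σ₀⟩
  choose! f hf using fun v (hv : v ∈ (σ₀ : Finset V)) =>
    K.exists_ne_superset_erase_of_boundary_eq_zero hc hσ₀ hv
  -- two distinct facets of `σ₀` already span `σ₀`, so distinct vertices give distinct faces
  have hinj : Set.InjOn f (σ₀ : Finset V) := by
    intro v hv w hw hfvw
    by_contra hvw
    obtain ⟨hne, -, hv⟩ := hf v hv
    obtain ⟨-, -, hw⟩ := hf w hw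
    refine hne (Subtype.ext (eq_of_subset_of_card_le (fun u hu => ?_) ?_).symm)
    · by_cases huv : u = v
      · exact hfvw ▸ hw (mem_erase.mpr ⟨huv ▸ hvw, hu⟩)
      · exact hv (mem_erase.mpr ⟨huv, hu⟩)
    · rw [hσ₀card, (mem_facesDim.mp (f v).2).2]
  set S : Finset {σ // σ ∈ K.facesDim (d + 1)} := {σ | c σ ≠ 0}
  have hσ₀S : σ₀ ∈ S := mem_filter.mpr ⟨mem_univ _, hσ₀⟩
  have hmaps : Set.MapsTo f (σ₀ : Finset V) (S.erase σ₀) := fun v hv =>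
    mem_erase.mpr ⟨(hf v hv).1, mem_filter.mpr ⟨mem_univ _, (hf v hv).2.1⟩⟩
  have hle := card_le_card_of_injOn f hmaps hinj
  rw [card_erase_of_mem hσ₀S, hσ₀card] at hle
  have hpos : 0 < #S := card_pos.mpr ⟨σ₀, hσ₀S⟩
  change d + 3 ≤ #S
  omega

end SComplex

open SComplex

/-- Proposition 14. -/
theorem prop14 {V : Type} [DecidableEq V] [Fintype V]
    (K : SComplex V) (hdim : K.IsDim 3) (hconn : K.betti 0 = 1)
    (hβ : 1 ≤ K.betti 3) (hcb : K.HasCompleteBasis 3 2) :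
    (3 : ℤ) * (K.fnum 3 : ℤ) ≤
      5 * ((K.fnum 2 : ℤ) - (K.fnum 1 : ℤ) - (K.betti 2 : ℤ) + (K.betti 1 : ℤ)
        + (K.fnum 0 : ℤ) - 2) := by
  obtain ⟨ι, _, b, hb⟩ := hcb
  have hβ₃ := K.betti_eq_finrank_ker_of_card_le hdim.1
  have hι := Module.finrank_eq_card_basis b
  have : Nonempty ι := Fintype.card_pos_iff.mp (by omega)
  have hcycles : 5 * (Fintype.card ι + 1) ≤ 2 * K.fnum 3 := by
    rw [fnum, ← Fintype.card_coe]
    exact mul_card_add_one_le_of_complete_basis b even_two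
      (fun w hw => K.add_three_le_suppCard w.2 (by simpa using hw)) hb
  -- the Euler–Poincaré relation, level by level
  have e₀ := K.betti_add_finrank_range_boundary 0
  have e₁ := K.betti_add_finrank_range_boundary 1
  have e₂ := K.betti_add_finrank_range_boundary 2
  have r₁ := K.finrank_range_add_finrank_ker_boundary 1
  have r₂ := K.finrank_range_add_finrank_ker_boundary 2
  have r₃ := K.finrank_range_add_finrank_ker_boundary 3
  have k₀ := K.finrank_ker_boundary_zero
  simp only [Nat.reduceAdd] at e₀ e₁ e₂
  omega
end

section
/- (Strengthened Sperner lemma, as used in Section 6) Let Σ be a finite simplicial complex all of whose vertices lie in a set of size n. Then for all integers i > j ≥ 0, f_i(Σ)·C(n, j+1) ≤ f_j(Σ)·C(n, i+1), where C(n, k) denotes the binomial coefficient n choose k. -/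
/-! Double count the pairs `τ ⊆ σ` of a `j`-face and an `i`-face: each `i`-face contains exactly
`C(i+1, j+1)` faces of dimension `j`, and each `j`-face lies in at most `C(n-j-1, i-j)` sets of
size `i+1`. The identity `C(n, i+1) C(i+1, j+1) = C(n, j+1) C(n-j-1, i-j)` turns the resulting
inequality into the claimed one. -/

open Finset

theorem Finset.card_filter_superset_le {α : Type*} [Fintype α] [DecidableEq α]
    {𝒜 : Finset (Finset α)} {r : ℕ} (h𝒜 : (𝒜 : Set (Finset α)).Sized r) (τ : Finset α) :
    #{σ ∈ 𝒜 | τ ⊆ σ} ≤ (Fintype.card α - #τ).choose (r - #τ) := by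
  rw [← card_compl, ← card_powersetCard]
  refine card_le_card_of_injOn (· \ τ) (fun σ hσ ↦ ?_) ?_
  · obtain ⟨hσ𝒜, hτσ⟩ := mem_filter.mp hσ
    rw [mem_coe, mem_powersetCard, card_sdiff_of_subset hτσ, h𝒜 hσ𝒜]
    exact ⟨fun x hx ↦ mem_compl.mpr (mem_sdiff.mp hx).2, rfl⟩
  · exact (superset_injOn_sdiff τ).mono fun σ hσ ↦ (mem_filter.mp hσ).2

namespace SComplex

variable {V : Type} [DecidableEq V] [Fintype V]

theorem sized_facesDim (K : SComplex V) (i : ℕ) :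
    (K.facesDim i : Set (Finset V)).Sized (i + 1) :=
  fun _ hσ ↦ (mem_filter.mp hσ).2

theorem filter_facesDim_subset_eq_powersetCard (K : SComplex V) {σ : Finset V}
    (hσ : σ ∈ K.faces) (j : ℕ) :
    {τ ∈ K.facesDim j | τ ⊆ σ} = σ.powersetCard (j + 1) := by
  ext τ
  simp only [facesDim, mem_filter, mem_powersetCard]
  constructor
  · rintro ⟨⟨-, hcard⟩, hτσ⟩
    exact ⟨hτσ, hcard⟩
  · rintro ⟨hτσ, hcard⟩
    have hτ : τ ≠ ∅ := by rintro rfl; simp at hcard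
    exact ⟨⟨K.down_closed σ hσ τ hτσ hτ, hcard⟩, hτσ⟩

theorem card_filter_facesDim_subset (K : SComplex V) {i : ℕ} {σ : Finset V}
    (hσ : σ ∈ K.facesDim i) (j : ℕ) :
    #{τ ∈ K.facesDim j | τ ⊆ σ} = (i + 1).choose (j + 1) := by
  obtain ⟨hσK, hcard⟩ := mem_filter.mp hσ
  rw [K.filter_facesDim_subset_eq_powersetCard hσK, card_powersetCard, hcard]

theorem fnum_mul_choose_le (K : SComplex V) (i j : ℕ) :
    K.fnum i * (i + 1).choose (j + 1) ≤
      K.fnum j * (Fintype.card V - (j + 1)).choose (i - j) := by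
  refine card_mul_le_card_mul (r := fun σ τ : Finset V ↦ τ ⊆ σ)
    (fun σ hσ ↦ (K.card_filter_facesDim_subset hσ j).ge) (fun τ hτ ↦ ?_)
  have h := card_filter_superset_le (K.sized_facesDim i) τ
  rwa [K.sized_facesDim j hτ, Nat.add_sub_add_right] at h

end SComplex

open SComplex
/-- strengthened Sperner lemma. -/
theorem sperner {V : Type} [DecidableEq V] [Fintype V] (n : ℕ)
    (hn : Fintype.card V = n) (K : SComplex V) (i j : ℕ) (hij : j < i) :
    K.fnum i * Nat.choose n (j + 1) ≤ K.fnum j * Nat.choose n (i + 1) := by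
  subst hn
  have hpos : 0 < (i + 1).choose (j + 1) := Nat.choose_pos (by omega)
  refine Nat.le_of_mul_le_mul_right ?_ hpos
  calc K.fnum i * (Fintype.card V).choose (j + 1) * (i + 1).choose (j + 1)
      = K.fnum i * (i + 1).choose (j + 1) * (Fintype.card V).choose (j + 1) := by ring
    _ ≤ K.fnum j * (Fintype.card V - (j + 1)).choose (i - j) * (Fintype.card V).choose (j + 1) :=
        Nat.mul_le_mul_right _ (K.fnum_mul_choose_le i j)
    _ = K.fnum j * (Fintype.card V).choose (i + 1) * (i + 1).choose (j + 1) := by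
        rw [mul_assoc _ (Nat.choose _ (i + 1)), Nat.choose_mul (by omega : j + 1 ≤ i + 1),
          Nat.add_sub_add_right]
        ring
end
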